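/- ∫₀^{π/2} θ·log(cos(θ/2)) dθ = -(π²/8)·log 2 + (π/2)·G - (7/8)·ζ_E(3), where G is Catalan's constant and ζ_E(3) = Σ_{n=1}^∞ (-1)^{n+1}/n³. -/

import Mathlib

/-!
For `|r| < 1` the Taylor series of `log (1 + z)` gives
`log ‖1 + r e^{iθ}‖ = ∑ (-1)^(n+1) r^n cos (nθ) / n`, and integrating termwise against `θ` over
`[0, π/2]` yields a power series in `r` with explicit coefficients of size `O(1/n²)`. Abel's theorem
lets `r → 1⁻` on the series side, dominated convergence (`1 ≤ ‖1 + r e^{iθ}‖ ≤ 2`) on the integral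
side. At `r = 1`, `‖1 + e^{iθ}‖ = 2 cos (θ/2)` splits off `(π²/8) log 2`, and by the parity of `n`
the coefficient series becomes `(π/2) G + ∑ (-1)^n/n³ - (1/8) ∑ (-1)^k/k³ = (π/2) G - (7/8) ζ_E(3)`.
-/

open Real Filter MeasureTheory Topology Set

lemma summable_div_nat_pow {f : ℕ → ℝ} (hf : ∀ n, |f n| ≤ 1) {p : ℕ} (hp : 1 < p) :
    Summable fun n : ℕ => f n / (n : ℝ) ^ p := by
  refine .of_norm_bounded (Real.summable_one_div_nat_pow.mpr hp) fun n => ?_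
  rw [norm_div, norm_pow, Real.norm_natCast, one_div, div_eq_mul_inv]
  exact mul_le_of_le_one_left (by positivity) (hf n)

lemma sin_even_nat_mul_pi_div_two (k : ℕ) : sin ((2 * k : ℕ) * (π / 2)) = 0 := by
  rw [show ((2 * k : ℕ) : ℝ) * (π / 2) = k * π by push_cast; ring, sin_nat_mul_pi]

lemma cos_even_nat_mul_pi_div_two (k : ℕ) : cos ((2 * k : ℕ) * (π / 2)) = (-1) ^ k := by
  rw [show ((2 * k : ℕ) : ℝ) * (π / 2) = k * π by push_cast; ring, cos_nat_mul_pi]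

lemma sin_odd_nat_mul_pi_div_two (k : ℕ) : sin ((2 * k + 1 : ℕ) * (π / 2)) = (-1) ^ k := by
  rw [show ((2 * k + 1 : ℕ) : ℝ) * (π / 2) = k * π + π / 2 by push_cast; ring,
    sin_add_pi_div_two, cos_nat_mul_pi]

lemma cos_odd_nat_mul_pi_div_two (k : ℕ) : cos ((2 * k + 1 : ℕ) * (π / 2)) = 0 := by
  rw [show ((2 * k + 1 : ℕ) : ℝ) * (π / 2) = k * π + π / 2 by push_cast; ring,
    cos_add_pi_div_two, sin_nat_mul_pi, neg_zero]

lemma neg_one_pow_mul_sin_nat_mul_pi_div_two (n : ℕ) :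
    (-1) ^ n * sin (n * (π / 2)) = -sin (n * (π / 2)) := by
  obtain ⟨k, rfl | rfl⟩ := Nat.even_or_odd' n
  · rw [sin_even_nat_mul_pi_div_two, mul_zero, neg_zero]
  · rw [pow_succ, pow_mul]; simp

lemma neg_one_pow_mul_cos_nat_mul_pi_div_two (n : ℕ) :
    (-1) ^ n * cos (n * (π / 2)) = cos (n * (π / 2)) := by
  obtain ⟨k, rfl | rfl⟩ := Nat.even_or_odd' n
  · rw [pow_mul]; simp
  · rw [cos_odd_nat_mul_pi_div_two, mul_zero]

lemma hasSum_sin_nat_mul_pi_div_two_div_pow {p : ℕ} (hp : 1 < p) :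
    HasSum (fun n : ℕ => sin (n * (π / 2)) / (n : ℝ) ^ p)
      (∑' k : ℕ, (-1) ^ k / (2 * (k : ℝ) + 1) ^ p) := by
  set f := fun n : ℕ => sin (n * (π / 2)) / (n : ℝ) ^ p
  have heven : (fun k => f (2 * k)) = 0 := by
    funext k
    simp only [f, sin_even_nat_mul_pi_div_two, zero_div, Pi.zero_apply]
  have hodd : (fun k => f (2 * k + 1)) = fun k : ℕ => (-1) ^ k / (2 * (k : ℝ) + 1) ^ p := by
    funext k
    simp only [f, sin_odd_nat_mul_pi_div_two]
    push_cast; ring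
  have hs : Summable f := summable_div_nat_pow (fun n => abs_sin_le_one _) hp
  have hs_odd : Summable fun k => f (2 * k + 1) :=
    hs.comp_injective (strictMono_nat_of_lt_succ fun k => by omega).injective
  rw [hodd] at hs_odd
  have h : HasSum f (0 + _) :=
    HasSum.even_add_odd (by rw [heven]; exact hasSum_zero) (by rw [hodd]; exact hs_odd.hasSum)
  rwa [zero_add] at h

lemma hasSum_cos_nat_mul_pi_div_two_div_pow {p : ℕ} (hp : 1 < p) :
    HasSum (fun n : ℕ => cos (n * (π / 2)) / (n : ℝ) ^ p)
      ((∑' k : ℕ, (-1) ^ k / (k : ℝ) ^ p) / 2 ^ p) := by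
  set f := fun n : ℕ => cos (n * (π / 2)) / (n : ℝ) ^ p
  have heven : (fun k => f (2 * k)) = fun k : ℕ => (-1) ^ k / (k : ℝ) ^ p / 2 ^ p := by
    funext k
    simp only [f, cos_even_nat_mul_pi_div_two]
    push_cast; ring
  have hodd : (fun k => f (2 * k + 1)) = 0 := by
    funext k
    simp only [f, cos_odd_nat_mul_pi_div_two, zero_div, Pi.zero_apply]
  have hs : Summable fun k : ℕ => (-1) ^ k / (k : ℝ) ^ p :=
    summable_div_nat_pow (fun n => by simp) hp
  have h : HasSum f (_ + 0) := HasSum.even_add_odd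
    (by rw [heven]; exact hs.hasSum.div_const (2 ^ p)) (by rw [hodd]; exact hasSum_zero)
  rwa [add_zero] at h

lemma hasSum_neg_one_pow_div_pow {p : ℕ} (hp : 1 < p) :
    HasSum (fun n : ℕ => (-1) ^ n / (n : ℝ) ^ p)
      (-∑' n : ℕ, (-1) ^ (n + 1 + 1) / ((n : ℝ) + 1) ^ p) := by
  have hs : Summable fun n : ℕ => (-1) ^ (n + 1 + 1) / ((n : ℝ) + 1) ^ p := by
    have := (summable_nat_add_iff 1).mpr (summable_div_nat_pow (f := fun n => (-1) ^ (n + 1))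
      (fun n => by simp) hp)
    simpa using this
  rw [← hasSum_nat_add_iff' 1]
  simpa [pow_succ, neg_div, zero_pow (by omega : p ≠ 0)] using hs.hasSum.neg

lemma hasSum_log_norm_one_add_mul_exp {r : ℝ} (hr : |r| < 1) (θ : ℝ) :
    HasSum (fun n : ℕ => (-1) ^ (n + 1) * r ^ n * cos (n * θ) / n)
      (log ‖1 + r * Complex.exp (θ * Complex.I)‖) := by
  have hz : ‖(r : ℂ) * Complex.exp (θ * Complex.I)‖ < 1 := by
    simpa [Complex.norm_exp_ofReal_mul_I] using hr
  have h := (Complex.hasSum_taylorSeries_log hz).mapL Complex.reCLM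
  rw [Complex.reCLM_apply, Complex.log_re] at h
  convert h using 2 with n
  rw [mul_pow, ← Complex.exp_nat_mul, Complex.reCLM_apply,
    show (n : ℂ) * (θ * Complex.I) = ((n * θ : ℝ) : ℂ) * Complex.I by push_cast; ring,
    show (-1) ^ (n + 1) * ((r : ℂ) ^ n * Complex.exp (((n * θ : ℝ) : ℂ) * Complex.I)) / n
      = (((-1) ^ (n + 1) * r ^ n / n : ℝ) : ℂ) * Complex.exp (((n * θ : ℝ) : ℂ) * Complex.I) by
        push_cast; ring,
    Complex.re_ofReal_mul, Complex.exp_ofReal_mul_I_re]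
  ring

lemma norm_one_add_exp_mul_I (θ : ℝ) :
    ‖1 + Complex.exp (θ * Complex.I)‖ = 2 * |cos (θ / 2)| := by
  have h : 1 + Complex.exp (θ * Complex.I)
      = Complex.exp ((θ / 2 : ℝ) * Complex.I) * (2 * cos (θ / 2) : ℝ) := by
    push_cast
    rw [Complex.two_cos, mul_add, ← Complex.exp_add, ← Complex.exp_add,
      show (θ / 2 : ℂ) * Complex.I + θ / 2 * Complex.I = θ * Complex.I by ring,
      show (θ / 2 : ℂ) * Complex.I + -(θ / 2) * Complex.I = 0 by ring, Complex.exp_zero, add_comm]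
  rw [h, norm_mul, Complex.norm_exp_ofReal_mul_I, one_mul, Complex.norm_real, norm_eq_abs,
    abs_mul, abs_two]

lemma one_le_norm_one_add_mul_exp {r θ : ℝ} (hr : 0 ≤ r) (hθ : 0 ≤ cos θ) :
    1 ≤ ‖1 + r * Complex.exp (θ * Complex.I)‖ :=
  calc (1 : ℝ) ≤ 1 + r * cos θ := le_add_of_nonneg_right (mul_nonneg hr hθ)
    _ = (1 + r * Complex.exp (θ * Complex.I)).re := by simp [Complex.exp_ofReal_mul_I_re]
    _ ≤ ‖1 + r * Complex.exp (θ * Complex.I)‖ := Complex.re_le_norm _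

lemma integral_mul_cos_mul {c : ℝ} (hc : c ≠ 0) (b : ℝ) :
    ∫ x in (0 : ℝ)..b, x * cos (c * x) = b * sin (c * b) / c + (cos (c * b) - 1) / c ^ 2 := by
  have hderiv : ∀ x ∈ uIcc 0 b, HasDerivAt (fun y => sin (c * y) / c) (cos (c * x)) x := by
    intro x _
    exact ((((hasDerivAt_id' x).const_mul c).sin).div_const c).congr_deriv (by field_simp)
  rw [intervalIntegral.integral_mul_deriv_eq_deriv_mul (fun x _ => hasDerivAt_id' x) hderiv
    intervalIntegrable_const
    ((by fun_prop : Continuous fun x => cos (c * x)).intervalIntegrable _ _)]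
  simp only [one_mul, intervalIntegral.integral_div,
    intervalIntegral.integral_comp_mul_left (fun y => sin y) hc, integral_sin, mul_zero, cos_zero, sin_zero, zero_div, sub_zero, smul_eq_mul]
  field_simp
  ring

lemma hasSum_integral_mul_log_norm_one_add_mul_exp {w : ℝ → ℝ} (hw : Continuous w) (a b : ℝ)
    {r : ℝ} (hr : |r| < 1) :
    HasSum (fun n : ℕ => (-1) ^ (n + 1) / n * (∫ θ in a..b, w θ * cos (n * θ)) * r ^ n)
      (∫ θ in a..b, w θ * log ‖1 + r * Complex.exp (θ * Complex.I)‖) := by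
  have hsum := intervalIntegral.hasSum_integral_of_dominated_convergence
    (μ := volume) (a := a) (b := b)
    (F := fun (n : ℕ) θ => w θ * ((-1) ^ (n + 1) * r ^ n * cos (n * θ) / n))
    (fun n θ => |w θ| * |r| ^ n)
    (fun n => (by fun_prop : Continuous _).aestronglyMeasurable)
    (fun n => ae_of_all _ fun θ _ => ?bound)
    (ae_of_all _ fun θ _ => (summable_geometric_of_lt_one (abs_nonneg r) hr).mul_left _)
    (by simp_rw [tsum_mul_left]; exact (by fun_prop : Continuous _).intervalIntegrable _ _)
    (ae_of_all _ fun θ _ => (hasSum_log_norm_one_add_mul_exp hr θ).mul_left (w θ))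
  case bound =>
    rw [norm_mul, norm_div, norm_mul, norm_mul, norm_pow, norm_pow, norm_neg, norm_one, one_pow,
      one_mul, norm_eq_abs, norm_eq_abs, norm_eq_abs]
    gcongr
    rcases Nat.eq_zero_or_pos n with rfl | hn
    · simp
    calc |r| ^ n * |cos (n * θ)| / ‖(n : ℝ)‖ ≤ |r| ^ n * 1 / 1 := by
          gcongr
          · exact abs_cos_le_one _
          · rw [norm_natCast]; exact Nat.one_le_cast.mpr hn
      _ = |r| ^ n := by ring
  have hterm (n : ℕ) : (-1) ^ (n + 1) / n * (∫ θ in a..b, w θ * cos (n * θ)) * r ^ n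
      = ∫ θ in a..b, w θ * ((-1) ^ (n + 1) * r ^ n * cos (n * θ) / n) := by
    rw [mul_comm, ← mul_assoc, ← intervalIntegral.integral_const_mul]
    congr 1 with θ
    ring
  simpa only [hterm] using hsum

lemma tendsto_integral_mul_log_norm_one_add_mul_exp {w : ℝ → ℝ} (hw : Continuous w) :
    Tendsto (fun r : ℝ => ∫ θ in (0 : ℝ)..π / 2, w θ * log ‖1 + r * Complex.exp (θ * Complex.I)‖)
      (𝓝[<] 1) (𝓝 (∫ θ in (0 : ℝ)..π / 2, w θ * log ‖1 + Complex.exp (θ * Complex.I)‖)) := by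
  have hcos : ∀ θ ∈ uIoc (0 : ℝ) (π / 2), 0 ≤ cos θ := fun θ hθ => by
    rw [uIoc_of_le (by positivity)] at hθ
    exact cos_nonneg_of_mem_Icc ⟨by linarith [pi_pos, hθ.1], hθ.2⟩
  refine intervalIntegral.tendsto_integral_filter_of_dominated_convergence
    (fun θ => |w θ| * log 2) (Eventually.of_forall fun r => ?_) ?_
    ((by fun_prop : Continuous fun θ => |w θ| * log 2).intervalIntegrable _ _)
    (ae_of_all _ fun θ hθ => ?_)
  · exact (hw.measurable.mul (by fun_prop)).aestronglyMeasurable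
  · filter_upwards [Ico_mem_nhdsLT (by norm_num : (0 : ℝ) < 1)] with r hr
    refine ae_of_all _ fun θ hθ => ?_
    have hlower := one_le_norm_one_add_mul_exp hr.1 (hcos θ hθ)
    have hupper : ‖1 + r * Complex.exp (θ * Complex.I)‖ ≤ 2 := by
      refine (norm_add_le _ _).trans ?_
      simp [Complex.norm_exp_ofReal_mul_I, abs_of_nonneg hr.1]
      linarith [hr.2]
    rw [norm_mul, norm_eq_abs, norm_eq_abs, abs_of_nonneg (log_nonneg hlower)]
    gcongr
  · have hne : ‖1 + ((1 : ℝ) : ℂ) * Complex.exp (θ * Complex.I)‖ ≠ 0 :=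
      (zero_lt_one.trans_le (one_le_norm_one_add_mul_exp zero_le_one (hcos θ hθ))).ne'
    have hcont : ContinuousAt (fun r : ℝ => w θ * log ‖1 + r * Complex.exp (θ * Complex.I)‖) 1 :=
      continuousAt_const.mul ((by fun_prop : Continuous fun r : ℝ =>
        ‖1 + r * Complex.exp (θ * Complex.I)‖).continuousAt.log hne)
    simpa using hcont.tendsto.mono_left nhdsWithin_le_nhds

lemma hasSum_of_tendsto_nhdsWithin_lt_one {a : ℕ → ℝ} {F : ℝ → ℝ} {l : ℝ} (ha : Summable a)
    (hF : ∀ᶠ r in 𝓝[<] 1, HasSum (fun n => a n * r ^ n) (F r))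
    (hl : Tendsto F (𝓝[<] 1) (𝓝 l)) : HasSum a l := by
  have habel := Real.tendsto_tsum_powerSeries_nhdsWithin_lt ha.hasSum.tendsto_sum_nat
  have hF' : Tendsto F (𝓝[<] 1) (𝓝 (∑' n, a n)) :=
    habel.congr' (hF.mono fun r hr => hr.tsum_eq)
  exact tendsto_nhds_unique hl hF' ▸ ha.hasSum

lemma hasSum_neg_one_pow_div_mul_integral_mul_cos :
    HasSum (fun n : ℕ => (-1) ^ (n + 1) / n * ∫ θ in (0 : ℝ)..π / 2, θ * cos (n * θ))
      (π / 2 * ∑' k : ℕ, (-1) ^ k / (2 * (k : ℝ) + 1) ^ 2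
        - 7 / 8 * ∑' n : ℕ, (-1) ^ (n + 1 + 1) / ((n : ℝ) + 1) ^ 3) := by
  have hclosed (n : ℕ) : (-1) ^ (n + 1) / n * ∫ θ in (0 : ℝ)..π / 2, θ * cos (n * θ)
      = π / 2 * (sin (n * (π / 2)) / (n : ℝ) ^ 2)
        + ((-1) ^ n / (n : ℝ) ^ 3 - cos (n * (π / 2)) / (n : ℝ) ^ 3) := by
    rcases eq_or_ne n 0 with rfl | hn
    · simp
    rw [integral_mul_cos_mul (Nat.cast_ne_zero.mpr hn), pow_succ]
    linear_combination (-(π / 2) / (n : ℝ) ^ 2) * neg_one_pow_mul_sin_nat_mul_pi_div_two n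
      + (-1 / (n : ℝ) ^ 3) * neg_one_pow_mul_cos_nat_mul_pi_div_two n
  have hodd := hasSum_neg_one_pow_div_pow (p := 3) (by norm_num)
  simp_rw [hclosed]
  have h := ((hasSum_sin_nat_mul_pi_div_two_div_pow (p := 2) (by norm_num)).mul_left (π / 2)).add
    (hodd.sub (hasSum_cos_nat_mul_pi_div_two_div_pow (p := 3) (by norm_num)))
  rwa [hodd.tsum_eq, show ∀ x y : ℝ, x + (-y - -y / 2 ^ 3) = x - 7 / 8 * y by
    intros; ring] at h

lemma integral_mul_log_norm_one_add_exp :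
    ∫ θ in (0 : ℝ)..π / 2, θ * log ‖1 + Complex.exp (θ * Complex.I)‖
      = π ^ 2 / 8 * log 2 + ∫ θ in (0 : ℝ)..π / 2, θ * log (cos (θ / 2)) := by
  have hcos : ∀ θ ∈ uIcc 0 (π / 2), 0 < cos (θ / 2) := fun θ hθ => by
    rw [uIcc_of_le (by positivity)] at hθ
    exact cos_pos_of_mem_Ioo ⟨by linarith [pi_pos, hθ.1], by linarith [pi_pos, hθ.2]⟩
  have hsplit : ∀ θ ∈ uIcc 0 (π / 2), θ * log ‖1 + Complex.exp (θ * Complex.I)‖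
      = θ * log 2 + θ * log (cos (θ / 2)) := fun θ hθ => by
    rw [norm_one_add_exp_mul_I, abs_of_pos (hcos θ hθ), log_mul two_ne_zero (hcos θ hθ).ne']
    ring
  have hint : IntervalIntegrable (fun θ => θ * log (cos (θ / 2))) volume 0 (π / 2) :=
    (continuousOn_id.mul ((by fun_prop : Continuous fun θ : ℝ => cos (θ / 2)).continuousOn.log
      fun θ hθ => (hcos θ hθ).ne')).intervalIntegrable
  rw [intervalIntegral.integral_congr hsplit, intervalIntegral.integral_add
    ((by fun_prop : Continuous fun θ : ℝ => θ * log 2).intervalIntegrable _ _) hint,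
    intervalIntegral.integral_mul_const, integral_id]
  ring

theorem integral_theta_log_cos_half :
    ∫ θ in (0 : ℝ)..(π / 2), θ * Real.log (Real.cos (θ / 2))
      = -(π ^ 2 / 8) * Real.log 2
        + (π / 2) * ∑' n : ℕ, (-1 : ℝ) ^ n / (2 * (n : ℝ) + 1) ^ 2
        - (7 / 8) * ∑' n : ℕ, (-1 : ℝ) ^ (n + 1 + 1) / ((n : ℝ) + 1) ^ 3 := by
  have habel : HasSum (fun n : ℕ => (-1) ^ (n + 1) / n * ∫ θ in (0 : ℝ)..π / 2, θ * cos (n * θ))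
      (∫ θ in (0 : ℝ)..π / 2, θ * log ‖1 + Complex.exp (θ * Complex.I)‖) := by
    refine hasSum_of_tendsto_nhdsWithin_lt_one
      hasSum_neg_one_pow_div_mul_integral_mul_cos.summable ?_
      (tendsto_integral_mul_log_norm_one_add_mul_exp continuous_id)
    filter_upwards [Ioo_mem_nhdsLT (by norm_num : (-1 : ℝ) < 1)] with r hr
    exact hasSum_integral_mul_log_norm_one_add_mul_exp continuous_id _ _ (abs_lt.mpr hr)
  have h := habel.unique hasSum_neg_one_pow_div_mul_integral_mul_cos
  rw [integral_mul_log_norm_one_add_exp] at h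
  linarith
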